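/- arXiv:1707.03588 — 2 statements merged into one kernel-verified Lean document; each statement's English description precedes it below -/
import Mathlib

section
/- Assume n ≥ 2. Let r0 > 0, set a0 = r0²·(pᵀQ⁻¹p)⁻¹ and x0 = (a0/r0)·Q⁻¹p. Then for a ∈ ℝ: if a = a0, then Q_a ∩ h_{r0} = {x0}; if a > a0, then Q_a ∩ h_{r0} is nonempty and contains more than one point (it is an ellipsoid in the hyperplane h_{r0} with center x0); and if a < a0, then Q_a ∩ h_{r0} is empty. -/
/-!
Let `c = pᵀQ⁻¹p > 0` and `x₀ = (r/c) Q⁻¹p`, so that `π x₀ = r`. Since `Q x₀` is a multiple of `p`,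
every `z` with `π z = 0` is `Q`-orthogonal to `x₀`, whence `v (x₀ + z) = r²/c + v z`. Thus
`Q_a ∩ h_r = x₀ + {z ∈ ker π | v z = a - r²/c}`: this is `{x₀}` when `a = r²/c` (`v` is definite),
empty when `a < r²/c` (`v ≥ 0`), and for `a > r²/c` it contains `x₀ ± z` for a rescaled nonzero
`z ∈ ker π`, which exists once `n ≥ 2`.
-/

open Matrix

variable {ι : Type*}

theorem Matrix.PosDef.isSymm {R : Type*} [CommRing R] [PartialOrder R] [StarRing R]
    [TrivialStar R] {Q : Matrix ι ι R} (hQ : Q.PosDef) : Q.IsSymm := by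
  rw [IsSymm, ← conjTranspose_eq_transpose_of_trivial]
  exact hQ.isHermitian

variable [Fintype ι]

theorem Matrix.exists_ne_zero_dotProduct_eq_zero {K : Type*} [Field K]
    (hι : 1 < Fintype.card ι) (p : ι → K) : ∃ w ≠ 0, p ⬝ᵥ w = 0 := by
  have hker : LinearMap.ker (dotProductBilin K K p) ≠ ⊥ :=
    LinearMap.ker_ne_bot_of_finrank_lt (by simpa [Module.finrank_fintype_fun_eq_card] using hι)
  obtain ⟨w, hw, hw0⟩ := Submodule.exists_mem_ne_zero_of_ne_bot hker
  exact ⟨w, hw0, by simpa using hw⟩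

theorem Matrix.IsSymm.dotProduct_mulVec_comm {R : Type*} [CommSemiring R]
    {Q : Matrix ι ι R} (hQ : Q.IsSymm) (x y : ι → R) : x ⬝ᵥ Q *ᵥ y = y ⬝ᵥ Q *ᵥ x := by
  conv_lhs => rw [← hQ.eq]
  exact dotProduct_transpose_mulVec Q x y

theorem Matrix.IsSymm.dotProduct_mulVec_add_of_orthogonal {R : Type*} [CommSemiring R]
    {Q : Matrix ι ι R} (hQ : Q.IsSymm) {x y : ι → R} (hxy : x ⬝ᵥ Q *ᵥ y = 0) :
    (x + y) ⬝ᵥ Q *ᵥ (x + y) = x ⬝ᵥ Q *ᵥ x + y ⬝ᵥ Q *ᵥ y := by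
  have hyx : y ⬝ᵥ Q *ᵥ x = 0 := by rw [hQ.dotProduct_mulVec_comm, hxy]
  simp only [mulVec_add, dotProduct_add, add_dotProduct, hxy, hyx]
  ring

/-- The point `x₀` of the hyperplane `p ⬝ᵥ x = r` at which `x ⬝ᵥ Q *ᵥ x` is minimal. -/
noncomputable def hyperplaneMinimizer [DecidableEq ι] (Q : Matrix ι ι ℝ) (p : ι → ℝ) (r : ℝ) :
    ι → ℝ :=
  (r / (p ⬝ᵥ Q⁻¹ *ᵥ p)) • Q⁻¹ *ᵥ p

/-- `Q_a ∩ h_r`. -/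
def traceOnHyperplane (Q : Matrix ι ι ℝ) (p : ι → ℝ) (r a : ℝ) : Set (ι → ℝ) :=
  {x | x ⬝ᵥ Q *ᵥ x = a ∧ p ⬝ᵥ x = r}

namespace Matrix.PosDef

variable {Q : Matrix ι ι ℝ}

theorem dotProduct_mulVec_self_nonneg (hQ : Q.PosDef) (x : ι → ℝ) : 0 ≤ x ⬝ᵥ Q *ᵥ x := by
  simpa using hQ.posSemidef.dotProduct_mulVec_nonneg x

theorem dotProduct_mulVec_self_eq_zero_iff (hQ : Q.PosDef) {x : ι → ℝ} :
    x ⬝ᵥ Q *ᵥ x = 0 ↔ x = 0 := by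
  refine ⟨fun h => ?_, fun h => by simp [h]⟩
  by_contra hx
  simpa [h] using hQ.dotProduct_mulVec_pos hx

variable [DecidableEq ι] {p : ι → ℝ} {r : ℝ}

theorem dotProduct_inv_mulVec_pos (hQ : Q.PosDef) (hp : p ≠ 0) : 0 < p ⬝ᵥ Q⁻¹ *ᵥ p := by
  simpa using hQ.inv.dotProduct_mulVec_pos hp

theorem mulVec_hyperplaneMinimizer (hQ : Q.PosDef) :
    Q *ᵥ hyperplaneMinimizer Q p r = (r / (p ⬝ᵥ Q⁻¹ *ᵥ p)) • p := by
  rw [hyperplaneMinimizer, mulVec_smul, mulVec_mulVec, mul_nonsing_inv _ hQ.det_pos.ne'.isUnit,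
    one_mulVec]

theorem dotProduct_hyperplaneMinimizer (hQ : Q.PosDef) (hp : p ≠ 0) :
    p ⬝ᵥ hyperplaneMinimizer Q p r = r := by
  rw [hyperplaneMinimizer, dotProduct_smul, smul_eq_mul,
    div_mul_cancel₀ _ (hQ.dotProduct_inv_mulVec_pos hp).ne']

theorem hyperplaneMinimizer_dotProduct_mulVec (hQ : Q.PosDef) (z : ι → ℝ) :
    hyperplaneMinimizer Q p r ⬝ᵥ Q *ᵥ z = r / (p ⬝ᵥ Q⁻¹ *ᵥ p) * (p ⬝ᵥ z) := by
  rw [hQ.isSymm.dotProduct_mulVec_comm, hQ.mulVec_hyperplaneMinimizer, dotProduct_smul,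
    smul_eq_mul, dotProduct_comm z]

theorem dotProduct_mulVec_hyperplaneMinimizer_add (hQ : Q.PosDef) (hp : p ≠ 0) {z : ι → ℝ}
    (hz : p ⬝ᵥ z = 0) :
    (hyperplaneMinimizer Q p r + z) ⬝ᵥ Q *ᵥ (hyperplaneMinimizer Q p r + z) =
      r ^ 2 * (p ⬝ᵥ Q⁻¹ *ᵥ p)⁻¹ + z ⬝ᵥ Q *ᵥ z := by
  have hc := (hQ.dotProduct_inv_mulVec_pos hp).ne'
  have horth : hyperplaneMinimizer Q p r ⬝ᵥ Q *ᵥ z = 0 := by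
    rw [hQ.hyperplaneMinimizer_dotProduct_mulVec, hz, mul_zero]
  rw [hQ.isSymm.dotProduct_mulVec_add_of_orthogonal horth,
    hQ.hyperplaneMinimizer_dotProduct_mulVec, hQ.dotProduct_hyperplaneMinimizer hp]
  field_simp

theorem add_mem_traceOnHyperplane_iff (hQ : Q.PosDef) (hp : p ≠ 0) {a : ℝ} {z : ι → ℝ} :
    hyperplaneMinimizer Q p r + z ∈ traceOnHyperplane Q p r a ↔
      p ⬝ᵥ z = 0 ∧ z ⬝ᵥ Q *ᵥ z = a - r ^ 2 * (p ⬝ᵥ Q⁻¹ *ᵥ p)⁻¹ := by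
  have hpz : p ⬝ᵥ (hyperplaneMinimizer Q p r + z) = r + p ⬝ᵥ z := by
    rw [dotProduct_add, hQ.dotProduct_hyperplaneMinimizer hp]
  constructor
  · rintro ⟨hv, hr⟩
    have hz : p ⬝ᵥ z = 0 := by linarith
    refine ⟨hz, ?_⟩
    rw [← hv, hQ.dotProduct_mulVec_hyperplaneMinimizer_add hp hz]
    ring
  · rintro ⟨hz, hv⟩
    refine ⟨?_, by rw [hpz, hz, add_zero]⟩
    rw [hQ.dotProduct_mulVec_hyperplaneMinimizer_add hp hz, hv]
    ring

theorem traceOnHyperplane_eq_singleton (hQ : Q.PosDef) (hp : p ≠ 0) :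
    traceOnHyperplane Q p r (r ^ 2 * (p ⬝ᵥ Q⁻¹ *ᵥ p)⁻¹) = {hyperplaneMinimizer Q p r} := by
  ext x
  rw [← add_sub_cancel (hyperplaneMinimizer Q p r) x, hQ.add_mem_traceOnHyperplane_iff hp,
    sub_self, hQ.dotProduct_mulVec_self_eq_zero_iff, Set.mem_singleton_iff, add_eq_left]
  exact and_iff_right_of_imp fun h => by rw [h, dotProduct_zero]

theorem traceOnHyperplane_eq_empty (hQ : Q.PosDef) (hp : p ≠ 0) {a : ℝ}
    (ha : a < r ^ 2 * (p ⬝ᵥ Q⁻¹ *ᵥ p)⁻¹) :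
    traceOnHyperplane Q p r a = ∅ := by
  refine Set.eq_empty_of_forall_notMem fun x hx => ?_
  rw [← add_sub_cancel (hyperplaneMinimizer Q p r) x, hQ.add_mem_traceOnHyperplane_iff hp] at hx
  linarith [hQ.dotProduct_mulVec_self_nonneg (x - hyperplaneMinimizer Q p r)]

theorem traceOnHyperplane_nontrivial (hQ : Q.PosDef) (hι : 1 < Fintype.card ι) (hp : p ≠ 0)
    {a : ℝ} (ha : r ^ 2 * (p ⬝ᵥ Q⁻¹ *ᵥ p)⁻¹ < a) : (traceOnHyperplane Q p r a).Nontrivial := by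
  obtain ⟨w, hw0, hpw⟩ := exists_ne_zero_dotProduct_eq_zero hι p
  have hwpos : 0 < w ⬝ᵥ Q *ᵥ w := by simpa using hQ.dotProduct_mulVec_pos hw0
  set t := √((a - r ^ 2 * (p ⬝ᵥ Q⁻¹ *ᵥ p)⁻¹) / (w ⬝ᵥ Q *ᵥ w))
  have ht : 0 < t := Real.sqrt_pos.2 (div_pos (by linarith) hwpos)
  have hmem : ∀ s : ℝ, s ^ 2 = t ^ 2 →
      hyperplaneMinimizer Q p r + s • w ∈ traceOnHyperplane Q p r a := by
    intro s hs
    rw [hQ.add_mem_traceOnHyperplane_iff hp, dotProduct_smul, hpw, smul_zero,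
      mulVec_smul, dotProduct_smul, smul_dotProduct, smul_smul, smul_eq_mul, ← sq, hs,
      Real.sq_sqrt (div_pos (by linarith) hwpos).le, div_mul_cancel₀ _ hwpos.ne']
    exact ⟨rfl, rfl⟩
  refine ⟨_, hmem t rfl, _, hmem (-t) (neg_sq t), fun h => ?_⟩
  have h2tw : (2 * t) • w = 0 := by
    rw [← sub_eq_zero] at h
    rw [← h]
    module
  simp [ht.ne', hw0] at h2tw

end Matrix.PosDef

theorem markowitz_trace_on_hyperplane_trichotomy_general {n : ℕ} (hn : 2 ≤ n)
    (Q : Matrix (Fin n) (Fin n) ℝ) (hQ : Q.PosDef)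
    (p : Fin n → ℝ) (hp : p ≠ 0)
    (r0 : ℝ)
    (a : ℝ) :
    (a = r0 ^ 2 * (p ⬝ᵥ Q⁻¹.mulVec p)⁻¹ →
      {x : Fin n → ℝ | x ⬝ᵥ Q.mulVec x = a ∧ p ⬝ᵥ x = r0}
        = {((r0 ^ 2 * (p ⬝ᵥ Q⁻¹.mulVec p)⁻¹) / r0) • Q⁻¹.mulVec p}) ∧
    (a > r0 ^ 2 * (p ⬝ᵥ Q⁻¹.mulVec p)⁻¹ →
      {x : Fin n → ℝ | x ⬝ᵥ Q.mulVec x = a ∧ p ⬝ᵥ x = r0}.Nonempty ∧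
      {x : Fin n → ℝ | x ⬝ᵥ Q.mulVec x = a ∧ p ⬝ᵥ x = r0}.Nontrivial) ∧
    (a < r0 ^ 2 * (p ⬝ᵥ Q⁻¹.mulVec p)⁻¹ →
      {x : Fin n → ℝ | x ⬝ᵥ Q.mulVec x = a ∧ p ⬝ᵥ x = r0} = ∅) := by
  -- also for `r0 = 0`, where both coefficients are `0` (`0 / 0 = 0`)
  have hx₀ : (r0 ^ 2 * (p ⬝ᵥ Q⁻¹ *ᵥ p)⁻¹ / r0) • Q⁻¹ *ᵥ p = hyperplaneMinimizer Q p r0 := by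
    rw [hyperplaneMinimizer, sq, mul_assoc, mul_div_right_comm, ← div_eq_mul_inv]
    rcases eq_or_ne r0 0 with rfl | hr0
    · simp
    · rw [div_self hr0, one_mul]
  change (_ → traceOnHyperplane Q p r0 a = _) ∧ (_ → (traceOnHyperplane Q p r0 a).Nonempty ∧
    (traceOnHyperplane Q p r0 a).Nontrivial) ∧ (_ → traceOnHyperplane Q p r0 a = ∅)
  rw [hx₀]
  refine ⟨fun ha => ?_, fun ha => ?_, fun ha => ?_⟩
  · exact ha ▸ hQ.traceOnHyperplane_eq_singleton hp
  · have hntr := hQ.traceOnHyperplane_nontrivial (by rwa [Fintype.card_fin]) hp ha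
    exact ⟨hntr.nonempty, hntr⟩
  · exact hQ.traceOnHyperplane_eq_empty hp ha

/-- with n ≥ 2, r0 > 0, a0 = r0²(pᵀQ⁻¹p)⁻¹ and x0 = (a0/r0)·Q⁻¹p:
if a = a0 then Q_a ∩ h_{r0} = {x0}; if a > a0 then Q_a ∩ h_{r0} is nonempty with
more than one point; if a < a0 then Q_a ∩ h_{r0} = ∅. -/
theorem markowitz_trace_on_hyperplane_trichotomy {n : ℕ} (hn : 2 ≤ n)
    (Q : Matrix (Fin n) (Fin n) ℝ) (hQ : Q.PosDef)
    (p : Fin n → ℝ) (hp : p ≠ 0)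
    (r0 : ℝ) (hr0 : 0 < r0)
    (a : ℝ) :
    (a = r0 ^ 2 * (p ⬝ᵥ Q⁻¹.mulVec p)⁻¹ →
      {x : Fin n → ℝ | x ⬝ᵥ Q.mulVec x = a ∧ p ⬝ᵥ x = r0}
        = {((r0 ^ 2 * (p ⬝ᵥ Q⁻¹.mulVec p)⁻¹) / r0) • Q⁻¹.mulVec p}) ∧
    (a > r0 ^ 2 * (p ⬝ᵥ Q⁻¹.mulVec p)⁻¹ →
      {x : Fin n → ℝ | x ⬝ᵥ Q.mulVec x = a ∧ p ⬝ᵥ x = r0}.Nonempty ∧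
      {x : Fin n → ℝ | x ⬝ᵥ Q.mulVec x = a ∧ p ⬝ᵥ x = r0}.Nontrivial) ∧
    (a < r0 ^ 2 * (p ⬝ᵥ Q⁻¹.mulVec p)⁻¹ →
      {x : Fin n → ℝ | x ⬝ᵥ Q.mulVec x = a ∧ p ⬝ᵥ x = r0} = ∅) :=
  markowitz_trace_on_hyperplane_trichotomy_general hn Q hQ p hp r0 a
end

section
/- Let x0 ∈ ℝⁿ, a0 = v(x0), r0 = π(x0), and assume r0 ≥ 0. The following six statements are equivalent: (i) r0·(Qx0) = a0·p; (ii) π(x0) = max{π(x) : v(x) ≤ a0} and v(x0) = min{v(x) : π(x) ≥ r0}; (iii) π(x0) = max{π(x) : v(x) ≤ a0}; (iv) π(x0) = max{π(x) : v(x) = a0}; (v) v(x0) = min{v(x) : π(x) ≥ r0}; (vi) v(x0) = min{v(x) : π(x) = r0}. -/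
/-!
Write `⟪x, y⟫ = xᵀQy`, `a₀ = v(x₀)` and `r₀ = π(x₀)`. Condition (i) says exactly that
`a₀ · π(y) = r₀ · ⟪x₀, y⟫` for every `y`; with `r₀ ≥ 0` the Cauchy–Schwarz inequality for
`⟪·, ·⟫` turns this into (iii) and (v), which trivially give (ii), (iv) and (vi).
Rescaling points onto the ellipsoid `v = a₀` shows (iv) ⇒ (vi). Finally (vi) ⇒ (i) is the
first-order condition: `x₀` minimises `v` on the hyperplane `π = r₀`, so it is `⟪·, ·⟫`-orthogonal
to `r₀ y - π(y) x₀ ∈ ker π` for every `y`, which is (i) again. Cauchy–Schwarz and the first-order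
condition both say that the nonnegative quadratic `t ↦ v(x + t y) - c` has nonpositive
discriminant.
-/

open Matrix

namespace Matrix

variable {ι : Type*} [Fintype ι]

theorem IsSymm.dotProduct_mulVec_comm_s17 {R : Type*} [CommSemiring R] {Q : Matrix ι ι R}
    (hQ : Q.IsSymm) (x y : ι → R) : x ⬝ᵥ Q *ᵥ y = y ⬝ᵥ Q *ᵥ x := by
  simpa only [hQ.eq] using dotProduct_transpose_mulVec Q x y

theorem IsSymm.dotProduct_mulVec_add_smul {R : Type*} [CommRing R] {Q : Matrix ι ι R}
    (hQ : Q.IsSymm) (x y : ι → R) (t : R) :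
    (x + t • y) ⬝ᵥ Q *ᵥ (x + t • y) =
      (y ⬝ᵥ Q *ᵥ y) * (t * t) + 2 * (x ⬝ᵥ Q *ᵥ y) * t + x ⬝ᵥ Q *ᵥ x := by
  simp only [mulVec_add, mulVec_smul, add_dotProduct, dotProduct_add, smul_dotProduct,
    dotProduct_smul, smul_eq_mul, hQ.dotProduct_mulVec_comm_s17 y x]
  ring

variable {Q : Matrix ι ι ℝ}

theorem PosSemidef.dotProduct_mulVec_self_nonneg (hQ : Q.PosSemidef) (x : ι → ℝ) :
    0 ≤ x ⬝ᵥ Q *ᵥ x := by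
  simpa using hQ.dotProduct_mulVec_nonneg x

theorem PosDef.dotProduct_mulVec_self_eq_zero_iff_s17 (hQ : Q.PosDef) {x : ι → ℝ} :
    x ⬝ᵥ Q *ᵥ x = 0 ↔ x = 0 := by
  refine ⟨fun h => ?_, fun h => by simp [h]⟩
  by_contra hx
  simpa [h] using hQ.dotProduct_mulVec_pos hx

theorem PosSemidef.sq_dotProduct_mulVec_le (hQ : Q.PosSemidef) (x y : ι → ℝ) :
    (x ⬝ᵥ Q *ᵥ y) ^ 2 ≤ (x ⬝ᵥ Q *ᵥ x) * (y ⬝ᵥ Q *ᵥ y) := by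
  have hsymm : Q.IsSymm := isHermitian_iff_isSymm.mp hQ.isHermitian
  have := discrim_le_zero fun t =>
    hsymm.dotProduct_mulVec_add_smul x y t ▸ hQ.dotProduct_mulVec_self_nonneg (x + t • y)
  unfold discrim at this
  linarith

theorem IsSymm.dotProduct_mulVec_eq_zero_of_forall_le (hQ : Q.IsSymm) {x y : ι → ℝ}
    (h : ∀ t : ℝ, x ⬝ᵥ Q *ᵥ x ≤ (x + t • y) ⬝ᵥ Q *ᵥ (x + t • y)) : x ⬝ᵥ Q *ᵥ y = 0 := by
  have := discrim_le_zero (a := y ⬝ᵥ Q *ᵥ y) (b := 2 * (x ⬝ᵥ Q *ᵥ y)) (c := 0) fun t => by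
    linarith [hQ.dotProduct_mulVec_add_smul x y t ▸ h t]
  unfold discrim at this
  nlinarith [sq_nonneg (x ⬝ᵥ Q *ᵥ y)]

end Matrix

section Markowitz

variable {ι : Type*} [Fintype ι] {Q : Matrix ι ι ℝ} {p x0 : ι → ℝ}

/-- Condition (i): the normal `Q x₀` of the ellipsoid `v = v(x₀)` at `x₀` is parallel to
the normal `p` of the hyperplane `π = π(x₀)`. -/
def IsTangencyPoint (Q : Matrix ι ι ℝ) (p x0 : ι → ℝ) : Prop :=
  (p ⬝ᵥ x0) • Q *ᵥ x0 = (x0 ⬝ᵥ Q *ᵥ x0) • p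

theorem isTangencyPoint_iff (hQ : Q.IsSymm) :
    IsTangencyPoint Q p x0 ↔
      ∀ y, (x0 ⬝ᵥ Q *ᵥ x0) * (p ⬝ᵥ y) = (p ⬝ᵥ x0) * (x0 ⬝ᵥ Q *ᵥ y) := by
  rw [IsTangencyPoint, ← sub_eq_zero, ← dotProduct_eq_zero_iff]
  refine forall_congr' fun y => ?_
  rw [sub_dotProduct, smul_dotProduct, smul_dotProduct, smul_eq_mul, smul_eq_mul,
    dotProduct_comm (Q *ᵥ x0) y, hQ.dotProduct_mulVec_comm_s17 y x0, sub_eq_zero, eq_comm]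

theorem IsTangencyPoint.dotProduct_le_of_dotProduct_mulVec_le (hQ : Q.PosDef)
    (hr0 : 0 ≤ p ⬝ᵥ x0) (h : IsTangencyPoint Q p x0) {x : ι → ℝ}
    (hx : x ⬝ᵥ Q *ᵥ x ≤ x0 ⬝ᵥ Q *ᵥ x0) : p ⬝ᵥ x ≤ p ⬝ᵥ x0 := by
  have hsymm : Q.IsSymm := isHermitian_iff_isSymm.mp hQ.isHermitian
  obtain ha0 | ha0 := (hQ.posSemidef.dotProduct_mulVec_self_nonneg x0).eq_or_lt
  · have hx0 : x0 = 0 := hQ.dotProduct_mulVec_self_eq_zero_iff_s17.mp ha0.symm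
    have hx : x = 0 := hQ.dotProduct_mulVec_self_eq_zero_iff_s17.mp
      (le_antisymm (ha0 ▸ hx) (hQ.posSemidef.dotProduct_mulVec_self_nonneg x))
    simp [hx0, hx]
  have hcs : x0 ⬝ᵥ Q *ᵥ x ≤ x0 ⬝ᵥ Q *ᵥ x0 := by
    refine le_of_sq_le_sq ?_ ha0.le
    calc (x0 ⬝ᵥ Q *ᵥ x) ^ 2 ≤ (x0 ⬝ᵥ Q *ᵥ x0) * (x ⬝ᵥ Q *ᵥ x) :=
          hQ.posSemidef.sq_dotProduct_mulVec_le x0 x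
      _ ≤ (x0 ⬝ᵥ Q *ᵥ x0) ^ 2 := by rw [sq]; exact mul_le_mul_of_nonneg_left hx ha0.le
  refine le_of_mul_le_mul_left ?_ ha0
  calc (x0 ⬝ᵥ Q *ᵥ x0) * (p ⬝ᵥ x) = (p ⬝ᵥ x0) * (x0 ⬝ᵥ Q *ᵥ x) :=
        (isTangencyPoint_iff hsymm).mp h x
    _ ≤ (p ⬝ᵥ x0) * (x0 ⬝ᵥ Q *ᵥ x0) := mul_le_mul_of_nonneg_left hcs hr0
    _ = (x0 ⬝ᵥ Q *ᵥ x0) * (p ⬝ᵥ x0) := mul_comm _ _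

theorem IsTangencyPoint.dotProduct_mulVec_le_of_dotProduct_le (hQ : Q.PosSemidef) (hp : p ≠ 0)
    (hr0 : 0 ≤ p ⬝ᵥ x0) (h : IsTangencyPoint Q p x0) {x : ι → ℝ} (hx : p ⬝ᵥ x0 ≤ p ⬝ᵥ x) :
    x0 ⬝ᵥ Q *ᵥ x0 ≤ x ⬝ᵥ Q *ᵥ x := by
  have hsymm : Q.IsSymm := isHermitian_iff_isSymm.mp hQ.isHermitian
  obtain ha0 | ha0 := (hQ.dotProduct_mulVec_self_nonneg x0).eq_or_lt
  · exact ha0 ▸ hQ.dotProduct_mulVec_self_nonneg x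
  have hr0_pos : 0 < p ⬝ᵥ x0 := by
    refine hr0.lt_of_ne fun hr => hp ?_
    have hap : (x0 ⬝ᵥ Q *ᵥ x0) • p = 0 := by rw [← h, ← hr, zero_smul]
    exact (smul_eq_zero.mp hap).resolve_left ha0.ne'
  have hle : x0 ⬝ᵥ Q *ᵥ x0 ≤ x0 ⬝ᵥ Q *ᵥ x := by
    refine le_of_mul_le_mul_left ?_ hr0_pos
    calc (p ⬝ᵥ x0) * (x0 ⬝ᵥ Q *ᵥ x0) ≤ (x0 ⬝ᵥ Q *ᵥ x0) * (p ⬝ᵥ x) := by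
          rw [mul_comm]; exact mul_le_mul_of_nonneg_left hx ha0.le
      _ = (p ⬝ᵥ x0) * (x0 ⬝ᵥ Q *ᵥ x) := (isTangencyPoint_iff hsymm).mp h x
  refine le_of_mul_le_mul_left ?_ ha0
  calc (x0 ⬝ᵥ Q *ᵥ x0) * (x0 ⬝ᵥ Q *ᵥ x0) ≤ (x0 ⬝ᵥ Q *ᵥ x) ^ 2 := by
        rw [sq]; exact mul_self_le_mul_self ha0.le hle
    _ ≤ (x0 ⬝ᵥ Q *ᵥ x0) * (x ⬝ᵥ Q *ᵥ x) := hQ.sq_dotProduct_mulVec_le x0 x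

theorem dotProduct_mul_sqrt_le {a r : ℝ} (ha : 0 ≤ a)
    (h : ∀ x, x ⬝ᵥ Q *ᵥ x = a → p ⬝ᵥ x ≤ r) {y : ι → ℝ} (hy : 0 < y ⬝ᵥ Q *ᵥ y) :
    p ⬝ᵥ y * √a ≤ r * √(y ⬝ᵥ Q *ᵥ y) := by
  have hsqrt : 0 < √(y ⬝ᵥ Q *ᵥ y) := Real.sqrt_pos_of_pos hy
  set s := √a / √(y ⬝ᵥ Q *ᵥ y)
  have hs : (s • y) ⬝ᵥ Q *ᵥ (s • y) = a := by
    simp only [mulVec_smul, smul_dotProduct, dotProduct_smul, smul_eq_mul, s]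
    field_simp
    rw [Real.sq_sqrt ha, Real.sq_sqrt hy.le, mul_comm]
  have hbound := h _ hs
  rw [dotProduct_smul, smul_eq_mul] at hbound
  calc p ⬝ᵥ y * √a = s * (p ⬝ᵥ y) * √(y ⬝ᵥ Q *ᵥ y) := by
        simp only [s]; field_simp
    _ ≤ r * √(y ⬝ᵥ Q *ᵥ y) := mul_le_mul_of_nonneg_right hbound hsqrt.le

theorem dotProduct_mulVec_le_of_forall_dotProduct_le (hQ : Q.PosDef) (hp : p ≠ 0)
    (h : ∀ x, x ⬝ᵥ Q *ᵥ x = x0 ⬝ᵥ Q *ᵥ x0 → p ⬝ᵥ x ≤ p ⬝ᵥ x0) {x : ι → ℝ}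
    (hx : p ⬝ᵥ x = p ⬝ᵥ x0) : x0 ⬝ᵥ Q *ᵥ x0 ≤ x ⬝ᵥ Q *ᵥ x := by
  obtain ha0 | ha0 := (hQ.posSemidef.dotProduct_mulVec_self_nonneg x0).eq_or_lt
  · exact ha0 ▸ hQ.posSemidef.dotProduct_mulVec_self_nonneg x
  have hpos {y : ι → ℝ} (hy : y ≠ 0) : 0 < y ⬝ᵥ Q *ᵥ y := by
    simpa using hQ.dotProduct_mulVec_pos hy
  have hr0 : 0 < p ⬝ᵥ x0 := by
    have hpp : 0 < p ⬝ᵥ p := by simpa using dotProduct_self_star_pos_iff.mpr hp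
    refine pos_of_mul_pos_left ?_ (Real.sqrt_nonneg (p ⬝ᵥ Q *ᵥ p))
    exact (mul_pos hpp (Real.sqrt_pos_of_pos ha0)).trans_le
      (dotProduct_mul_sqrt_le ha0.le h (hpos hp))
  have hx0 : x ≠ 0 := by
    rintro rfl
    simp only [dotProduct_zero] at hx
    exact hr0.ne hx
  have hsqrt := dotProduct_mul_sqrt_le ha0.le h (hpos hx0)
  rw [hx] at hsqrt
  exact (Real.sqrt_le_sqrt_iff (hpos hx0).le).mp (le_of_mul_le_mul_left hsqrt hr0)

theorem isTangencyPoint_of_forall_dotProduct_mulVec_le (hQ : Q.IsSymm)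
    (h : ∀ x, p ⬝ᵥ x = p ⬝ᵥ x0 → x0 ⬝ᵥ Q *ᵥ x0 ≤ x ⬝ᵥ Q *ᵥ x) : IsTangencyPoint Q p x0 := by
  refine (isTangencyPoint_iff hQ).mpr fun y => ?_
  set w := (p ⬝ᵥ x0) • y - (p ⬝ᵥ y) • x0
  have hw (t : ℝ) : p ⬝ᵥ (x0 + t • w) = p ⬝ᵥ x0 := by
    simp only [w, dotProduct_add, dotProduct_smul, dotProduct_sub, smul_eq_mul]
    ring
  have horth := hQ.dotProduct_mulVec_eq_zero_of_forall_le fun t => h _ (hw t)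
  simp only [w, mulVec_sub, mulVec_smul, dotProduct_sub, dotProduct_smul, smul_eq_mul] at horth
  linarith

end Markowitz

theorem markowitz_efficiency_equivalences_general {n : ℕ}
    (Q : Matrix (Fin n) (Fin n) ℝ) (hQ : Q.PosDef)
    (p : Fin n → ℝ) (hp : p ≠ 0)
    (x0 : Fin n → ℝ) (hr0 : 0 ≤ p ⬝ᵥ x0) :
    ((p ⬝ᵥ x0) • Q.mulVec x0 = (x0 ⬝ᵥ Q.mulVec x0) • p ↔
      ((∀ x : Fin n → ℝ, x ⬝ᵥ Q.mulVec x ≤ x0 ⬝ᵥ Q.mulVec x0 → p ⬝ᵥ x ≤ p ⬝ᵥ x0) ∧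
       (∀ x : Fin n → ℝ, p ⬝ᵥ x0 ≤ p ⬝ᵥ x → x0 ⬝ᵥ Q.mulVec x0 ≤ x ⬝ᵥ Q.mulVec x))) ∧
    ((p ⬝ᵥ x0) • Q.mulVec x0 = (x0 ⬝ᵥ Q.mulVec x0) • p ↔
      (∀ x : Fin n → ℝ, x ⬝ᵥ Q.mulVec x ≤ x0 ⬝ᵥ Q.mulVec x0 → p ⬝ᵥ x ≤ p ⬝ᵥ x0)) ∧
    ((p ⬝ᵥ x0) • Q.mulVec x0 = (x0 ⬝ᵥ Q.mulVec x0) • p ↔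
      (∀ x : Fin n → ℝ, x ⬝ᵥ Q.mulVec x = x0 ⬝ᵥ Q.mulVec x0 → p ⬝ᵥ x ≤ p ⬝ᵥ x0)) ∧
    ((p ⬝ᵥ x0) • Q.mulVec x0 = (x0 ⬝ᵥ Q.mulVec x0) • p ↔
      (∀ x : Fin n → ℝ, p ⬝ᵥ x0 ≤ p ⬝ᵥ x → x0 ⬝ᵥ Q.mulVec x0 ≤ x ⬝ᵥ Q.mulVec x)) ∧
    ((p ⬝ᵥ x0) • Q.mulVec x0 = (x0 ⬝ᵥ Q.mulVec x0) • p ↔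
      (∀ x : Fin n → ℝ, p ⬝ᵥ x = p ⬝ᵥ x0 → x0 ⬝ᵥ Q.mulVec x0 ≤ x ⬝ᵥ Q.mulVec x)) := by
  have i_iii (h : IsTangencyPoint Q p x0) (x : Fin n → ℝ) :=
    h.dotProduct_le_of_dotProduct_mulVec_le hQ hr0 (x := x)
  have i_v (h : IsTangencyPoint Q p x0) (x : Fin n → ℝ) :=
    h.dotProduct_mulVec_le_of_dotProduct_le hQ.posSemidef hp hr0 (x := x)
  have iv_vi (h : ∀ x, x ⬝ᵥ Q *ᵥ x = x0 ⬝ᵥ Q *ᵥ x0 → p ⬝ᵥ x ≤ p ⬝ᵥ x0) (x : Fin n → ℝ) :=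
    dotProduct_mulVec_le_of_forall_dotProduct_le hQ hp h (x := x)
  have vi_i := isTangencyPoint_of_forall_dotProduct_mulVec_le (p := p) (x0 := x0)
    (isHermitian_iff_isSymm.mp hQ.isHermitian)
  exact ⟨⟨fun h => ⟨i_iii h, i_v h⟩, fun h => vi_i (iv_vi fun x hx => h.1 x hx.le)⟩,
    ⟨i_iii, fun h => vi_i (iv_vi fun x hx => h x hx.le)⟩,
    ⟨fun h x hx => i_iii h x hx.le, fun h => vi_i (iv_vi h)⟩,
    ⟨i_v, fun h => vi_i fun x hx => h x hx.ge⟩,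
    ⟨fun h x hx => i_v h x hx.ge, vi_i⟩⟩

/-- for x0 with a0 = v(x0), r0 = π(x0) ≥ 0, the following are
equivalent: (i) r0·Qx0 = a0·p; (ii) π(x0) = max{π : v ≤ a0} and v(x0) = min{v : π ≥ r0};
(iii) π(x0) = max{π : v ≤ a0}; (iv) π(x0) = max{π : v = a0};
(v) v(x0) = min{v : π ≥ r0}; (vi) v(x0) = min{v : π = r0}. -/
theorem markowitz_efficiency_equivalences {n : ℕ} (hn : 0 < n)
    (Q : Matrix (Fin n) (Fin n) ℝ) (hQ : Q.PosDef)
    (p : Fin n → ℝ) (hp : p ≠ 0)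
    (x0 : Fin n → ℝ) (hr0 : 0 ≤ p ⬝ᵥ x0) :
    ((p ⬝ᵥ x0) • Q.mulVec x0 = (x0 ⬝ᵥ Q.mulVec x0) • p ↔
      ((∀ x : Fin n → ℝ, x ⬝ᵥ Q.mulVec x ≤ x0 ⬝ᵥ Q.mulVec x0 → p ⬝ᵥ x ≤ p ⬝ᵥ x0) ∧
       (∀ x : Fin n → ℝ, p ⬝ᵥ x0 ≤ p ⬝ᵥ x → x0 ⬝ᵥ Q.mulVec x0 ≤ x ⬝ᵥ Q.mulVec x))) ∧
    ((p ⬝ᵥ x0) • Q.mulVec x0 = (x0 ⬝ᵥ Q.mulVec x0) • p ↔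
      (∀ x : Fin n → ℝ, x ⬝ᵥ Q.mulVec x ≤ x0 ⬝ᵥ Q.mulVec x0 → p ⬝ᵥ x ≤ p ⬝ᵥ x0)) ∧
    ((p ⬝ᵥ x0) • Q.mulVec x0 = (x0 ⬝ᵥ Q.mulVec x0) • p ↔
      (∀ x : Fin n → ℝ, x ⬝ᵥ Q.mulVec x = x0 ⬝ᵥ Q.mulVec x0 → p ⬝ᵥ x ≤ p ⬝ᵥ x0)) ∧
    ((p ⬝ᵥ x0) • Q.mulVec x0 = (x0 ⬝ᵥ Q.mulVec x0) • p ↔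
      (∀ x : Fin n → ℝ, p ⬝ᵥ x0 ≤ p ⬝ᵥ x → x0 ⬝ᵥ Q.mulVec x0 ≤ x ⬝ᵥ Q.mulVec x)) ∧
    ((p ⬝ᵥ x0) • Q.mulVec x0 = (x0 ⬝ᵥ Q.mulVec x0) • p ↔
      (∀ x : Fin n → ℝ, p ⬝ᵥ x = p ⬝ᵥ x0 → x0 ⬝ᵥ Q.mulVec x0 ≤ x ⬝ᵥ Q.mulVec x)) :=
  markowitz_efficiency_equivalences_general Q hQ p hp x0 hr0
end
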